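/- With the notation of the polar fixed-point equations for primary resonance, eliminating φ via sin²φ + cos²φ = 1 yields the quadratic equation a Ω² + b Ω + c = 0 in Ω with a = ρ², b = −2 f₁^I ρ² − f₂^I ρ⁴/2, and c = |f₁|² ρ² + (f₁^I f₂^I + f₁^R f₂^R) ρ⁴/2 + |f₂|² ρ⁶/16 − 4 (f₃^R)² (1+α²). -/

import Mathlib

/-!
The numerators of `sin φ` and `-cos φ` are the components of the rotation-like map
`(u, v) ↦ (u - α v, v + α u)` applied to `u = (f₁ᴵ - Ω)ρ + f₂ᴵρ³/4`, `v = f₁ᴿρ + f₂ᴿρ³/4`,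
which scales squared norms by `1 + α²`. Since `sin²φ + cos²φ = 1`, the squared norm of the
numerators equals the squared denominator `4(f₃ᴿ)²(1 + α²)²`, so `u² + v² = 4(f₃ᴿ)²(1 + α²)`,
and `u² + v² - 4(f₃ᴿ)²(1 + α²)` is the quadratic in `Ω`.
-/

open Real

theorem sq_add_sq_eq_sq_of_sin_eq_div_of_cos_eq_div {φ S C D : ℝ}
    (hs : sin φ = S / D) (hc : cos φ = C / D) : S ^ 2 + C ^ 2 = D ^ 2 := by
  have hpyth := sin_sq_add_cos_sq φ
  rcases eq_or_ne D 0 with rfl | hD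
  · simp [hs, hc] at hpyth
  · rwa [hs, hc, div_pow, div_pow, ← add_div, div_eq_one_iff_eq (pow_ne_zero 2 hD)] at hpyth

theorem primary_resonance_quadratic_general (f1R f1I f2R f2I f3R f3I ρ φ Ω : ℝ)
    (hs : Real.sin φ = ((f1I - (f3I / f3R) * f1R - Ω) * ρ + (f2I - (f3I / f3R) * f2R) * ρ ^ 3 / 4) /
        (2 * f3R * (1 + (f3I / f3R) ^ 2)))
    (hc : Real.cos φ = -(((f1R + (f3I / f3R) * f1I - (f3I / f3R) * Ω) * ρ +
        (f2R + (f3I / f3R) * f2I) * ρ ^ 3 / 4) / (2 * f3R * (1 + (f3I / f3R) ^ 2)))) :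
    ρ ^ 2 * Ω ^ 2 + (-2 * f1I * ρ ^ 2 - f2I * ρ ^ 4 / 2) * Ω +
      ((f1R ^ 2 + f1I ^ 2) * ρ ^ 2 + (f1I * f2I + f1R * f2R) * ρ ^ 4 / 2 +
        (f2R ^ 2 + f2I ^ 2) * ρ ^ 6 / 16 - 4 * f3R ^ 2 * (1 + (f3I / f3R) ^ 2)) = 0 := by
  set α := f3I / f3R
  set u := (f1I - Ω) * ρ + f2I * ρ ^ 3 / 4
  set v := f1R * ρ + f2R * ρ ^ 3 / 4
  rw [← neg_div] at hc
  have hnorm := sq_add_sq_eq_sq_of_sin_eq_div_of_cos_eq_div hs hc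
  have hscaled : (1 + α ^ 2) * (u ^ 2 + v ^ 2 - 4 * f3R ^ 2 * (1 + α ^ 2)) = 0 := by
    linear_combination hnorm
  have hquad := (mul_eq_zero.mp hscaled).resolve_left (by positivity)
  linear_combination hquad

/-- Eliminating the phase via `sin²φ + cos²φ = 1` from the expressions for `sin φ` and
`cos φ` yields the quadratic `a Ω² + b Ω + c = 0` with
`a = ρ²`, `b = -2f₁ᴵρ² - f₂ᴵρ⁴/2`,
`c = |f₁|²ρ² + (f₁ᴵf₂ᴵ + f₁ᴿf₂ᴿ)ρ⁴/2 + |f₂|²ρ⁶/16 - 4(f₃ᴿ)²(1+α²)`. -/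
theorem primary_resonance_quadratic (f1R f1I f2R f2I f3R f3I ρ φ Ω : ℝ) (h3 : f3R ≠ 0)
    (hs : Real.sin φ = ((f1I - (f3I / f3R) * f1R - Ω) * ρ + (f2I - (f3I / f3R) * f2R) * ρ ^ 3 / 4) /
        (2 * f3R * (1 + (f3I / f3R) ^ 2)))
    (hc : Real.cos φ = -(((f1R + (f3I / f3R) * f1I - (f3I / f3R) * Ω) * ρ +
        (f2R + (f3I / f3R) * f2I) * ρ ^ 3 / 4) / (2 * f3R * (1 + (f3I / f3R) ^ 2)))) :
    ρ ^ 2 * Ω ^ 2 + (-2 * f1I * ρ ^ 2 - f2I * ρ ^ 4 / 2) * Ω +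
      ((f1R ^ 2 + f1I ^ 2) * ρ ^ 2 + (f1I * f2I + f1R * f2R) * ρ ^ 4 / 2 +
        (f2R ^ 2 + f2I ^ 2) * ρ ^ 6 / 16 - 4 * f3R ^ 2 * (1 + (f3I / f3R) ^ 2)) = 0 :=
  primary_resonance_quadratic_general f1R f1I f2R f2I f3R f3I ρ φ Ω hs hc
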